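/- Let p ≥ 0 be an integer, n > 0 real, and κ ∈ ℂ such that J_p(κ) = 0 and J_p(√n·κ) = 0. Then F_{p+1}(κ, n) = 0, and if p ≥ 1 also F_{p−1}(κ, n) = 0. In other words, any ITE of the unit disk arising as a common zero of J_p and J_p(√n·) is simultaneously an ITE for the neighboring angular orders p+1 and (when p ≥ 1) p−1, which increases its geometric multiplicity. -/

import Mathlib

open Complex Real Filter Set

/-- Bessel function of the first kind of integer order `p`. -/
noncomputable def besselJ (p : ℕ) (z : ℂ) : ℂ :=
  ∑' m : ℕ, ((-1 : ℂ) ^ m / ((Nat.factorial m : ℂ) * (Nat.factorial (m + p) : ℂ)))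
    * (z / 2) ^ (2 * m + p)

/-- Derivative of the Bessel function. -/
noncomputable def besselJ' (p : ℕ) (z : ℂ) : ℂ := deriv (besselJ p) z

/-- The ITE determinant function `F_p(κ, n)`. -/
noncomputable def Fp (p : ℕ) (κ : ℂ) (n : ℝ) : ℂ :=
  κ * (besselJ' p κ * besselJ p ((Real.sqrt n : ℂ) * κ)
    - (Real.sqrt n : ℂ) * besselJ p κ * besselJ' p ((Real.sqrt n : ℂ) * κ))

/-!
At a zero `z` of `J_p` the recurrences `z J_{p+1} = p J_p - z J_p'` and
`z J_{p+1}' = z J_p - (p + 1) J_{p+1}` reduce to `z J_{p+1}'(z) = -(p + 1) J_{p+1}(z)` and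
`z J_{p-1}'(z) = (p - 1) J_{p-1}(z)`. So for `q = p ± 1` both `κ` and `√n κ` satisfy one and the
same relation `z J_q'(z) = c J_q(z)`, and then the two products in `F_q(κ, n)` cancel.
The recurrences are proved on the power series, differentiated termwise.
-/

noncomputable def besselCoeff (p m : ℕ) : ℂ :=
  (-1 : ℂ) ^ m / ((m.factorial : ℂ) * ((m + p).factorial : ℂ))

lemma norm_besselCoeff_le (p m : ℕ) : ‖besselCoeff p m‖ ≤ (m.factorial : ℝ)⁻¹ := by
  have h : (1 : ℝ) ≤ ((m + p).factorial : ℝ) := mod_cast Nat.factorial_pos _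
  simp only [besselCoeff, norm_div, norm_pow, norm_neg, norm_one, one_pow, norm_mul,
    Complex.norm_natCast, mul_inv, one_div]
  exact mul_le_of_le_one_right (by positivity) (inv_le_one_of_one_le₀ h)

lemma norm_besselCoeff_mul_pow_le {p m : ℕ} {w : ℂ} {R : ℝ} (hw : ‖w‖ ≤ R) :
    ‖besselCoeff p m * w ^ (2 * m + p)‖ ≤ R ^ p * ((R ^ 2) ^ m / m.factorial) := by
  have hR : 0 ≤ R := (norm_nonneg w).trans hw
  calc ‖besselCoeff p m * w ^ (2 * m + p)‖
      ≤ (m.factorial : ℝ)⁻¹ * R ^ (2 * m + p) := by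
        rw [norm_mul, norm_pow]
        gcongr
        exact norm_besselCoeff_le p m
    _ = R ^ p * ((R ^ 2) ^ m / m.factorial) := by ring

lemma summable_besselCoeff_mul_pow (p : ℕ) (w : ℂ) :
    Summable fun m ↦ besselCoeff p m * w ^ (2 * m + p) :=
  ((Real.summable_pow_div_factorial _).mul_left _).of_norm_bounded
    fun _ ↦ norm_besselCoeff_mul_pow_le le_rfl

lemma hasSum_besselJ (p : ℕ) (z : ℂ) :
    HasSum (fun m ↦ besselCoeff p m * (z / 2) ^ (2 * m + p)) (besselJ p z) :=
  (summable_besselCoeff_mul_pow p (z / 2)).hasSum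

lemma mul_deriv_div_two_pow (k : ℕ) (z : ℂ) :
    z * deriv (fun w : ℂ ↦ (w / 2) ^ k) z = k * (z / 2) ^ k := by
  rw [(((hasDerivAt_id' z).div_const 2).fun_pow k).deriv]
  cases k with
  | zero => simp
  | succ j => simp only [Nat.add_sub_cancel, pow_succ]; push_cast; ring

lemma hasSum_mul_besselJ' (p : ℕ) (z : ℂ) :
    HasSum (fun m ↦ ((2 * m + p : ℕ) : ℂ) * (besselCoeff p m * (z / 2) ^ (2 * m + p)))
      (z * besselJ' p z) := by
  have hderiv := Complex.hasSum_deriv_of_summable_norm (z := z) (U := Metric.ball 0 (‖z‖ + 1))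
    (F := fun m w ↦ besselCoeff p m * (w / 2) ^ (2 * m + p))
    ((Real.summable_pow_div_factorial (((‖z‖ + 1) / 2) ^ 2)).mul_left (((‖z‖ + 1) / 2) ^ p))
    (fun m ↦ by fun_prop) Metric.isOpen_ball
    (fun m w hw ↦ norm_besselCoeff_mul_pow_le <| by
      rw [mem_ball_zero_iff] at hw
      rw [norm_div, Complex.norm_ofNat]
      linarith)
    (by simp)
  refine (hderiv.mul_left z).congr_fun fun m ↦ ?_
  rw [deriv_const_mul _ (by fun_prop), mul_left_comm z, mul_deriv_div_two_pow]
  ring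

lemma succ_mul_besselCoeff_succ (p m : ℕ) :
    ((m : ℂ) + 1) * besselCoeff p (m + 1) = -besselCoeff (p + 1) m := by
  rw [besselCoeff, besselCoeff, show m + 1 + p = m + (p + 1) by omega, Nat.factorial_succ]
  have := Nat.cast_add_one_ne_zero (R := ℂ) m
  have := (Nat.factorial_pos m).ne'
  have := (Nat.factorial_pos (m + (p + 1))).ne'
  push_cast
  field_simp
  ring

lemma add_succ_mul_besselCoeff_succ (p m : ℕ) :
    ((m : ℂ) + p + 1) * besselCoeff (p + 1) m = besselCoeff p m := by
  rw [besselCoeff, besselCoeff, show m + (p + 1) = m + p + 1 by omega, Nat.factorial_succ]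
  have := Nat.cast_add_one_ne_zero (R := ℂ) (m + p)
  have := (Nat.factorial_pos m).ne'
  have := (Nat.factorial_pos (m + p)).ne'
  push_cast at *
  field_simp

lemma mul_besselJ_succ (p : ℕ) (z : ℂ) :
    z * besselJ (p + 1) z = p * besselJ p z - z * besselJ' p z := by
  have hsum := ((hasSum_besselJ p z).mul_left (p : ℂ)).sub (hasSum_mul_besselJ' p z)
  -- the `m = 0` term is `(p - p) a_0 (z/2)^p = 0`; after the shift `m ↦ m + 1` the terms are
  -- those of `z J_{p+1}`
  have hshift := (hasSum_nat_add_iff' 1).mpr hsum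
  simp only [Finset.sum_range_one, mul_zero, zero_add, Nat.cast_add, Nat.cast_mul, Nat.cast_ofNat,
    Nat.cast_zero, sub_self, sub_zero] at hshift
  refine ((hasSum_besselJ (p + 1) z).mul_left z).unique (hshift.congr_fun fun m ↦ ?_)
  rw [show 2 * (m + 1) + p = 2 * m + (p + 1) + 1 by omega, pow_succ]
  push_cast
  linear_combination 2 * (z / 2) ^ (2 * m + (p + 1)) * (z / 2) * succ_mul_besselCoeff_succ p m

lemma mul_besselJ'_succ (p : ℕ) (z : ℂ) :
    z * besselJ' (p + 1) z = z * besselJ p z - (p + 1) * besselJ (p + 1) z := by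
  have hsum := ((hasSum_besselJ p z).mul_left z).sub
    ((hasSum_besselJ (p + 1) z).mul_left ((p : ℂ) + 1))
  refine (hasSum_mul_besselJ' (p + 1) z).unique (hsum.congr_fun fun m ↦ ?_)
  rw [show 2 * m + (p + 1) = 2 * m + p + 1 by omega, pow_succ]
  push_cast
  linear_combination 2 * (z / 2) ^ (2 * m + p) * (z / 2) * add_succ_mul_besselCoeff_succ p m

lemma Fp_eq_zero_of_mul_besselJ'_eq {q : ℕ} {κ : ℂ} {n : ℝ} (c : ℂ)
    (hκ : κ * besselJ' q κ = c * besselJ q κ)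
    (hnκ : ((√n : ℂ) * κ) * besselJ' q ((√n : ℂ) * κ) = c * besselJ q ((√n : ℂ) * κ)) :
    Fp q κ n = 0 := by
  rw [Fp]
  linear_combination besselJ q ((√n : ℂ) * κ) * hκ - besselJ q κ * hnκ

lemma mul_besselJ'_succ_of_besselJ_eq_zero {p : ℕ} {z : ℂ} (h : besselJ p z = 0) :
    z * besselJ' (p + 1) z = -(p + 1) * besselJ (p + 1) z := by
  rw [mul_besselJ'_succ, h]
  ring

lemma mul_besselJ'_of_besselJ_succ_eq_zero {q : ℕ} {z : ℂ} (h : besselJ (q + 1) z = 0) :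
    z * besselJ' q z = q * besselJ q z := by
  linear_combination mul_besselJ_succ q z - z * h

theorem stmt_16_general (p : ℕ) (n : ℝ) (κ : ℂ)
    (hJ : besselJ p κ = 0) (hJn : besselJ p ((Real.sqrt n : ℂ) * κ) = 0) :
    Fp (p + 1) κ n = 0 ∧ (1 ≤ p → Fp (p - 1) κ n = 0) := by
  refine ⟨Fp_eq_zero_of_mul_besselJ'_eq _ (mul_besselJ'_succ_of_besselJ_eq_zero hJ)
    (mul_besselJ'_succ_of_besselJ_eq_zero hJn), fun hp ↦ ?_⟩
  obtain ⟨q, rfl⟩ : ∃ q, p = q + 1 := ⟨p - 1, by omega⟩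
  exact Fp_eq_zero_of_mul_besselJ'_eq _ (mul_besselJ'_of_besselJ_succ_eq_zero hJ)
    (mul_besselJ'_of_besselJ_succ_eq_zero hJn)

/-- common zeros of `J_p` and `J_p(√n·)` are ITEs for neighboring angular orders. -/
theorem stmt_16 (p : ℕ) (n : ℝ) (hn : 0 < n) (κ : ℂ)
    (hJ : besselJ p κ = 0) (hJn : besselJ p ((Real.sqrt n : ℂ) * κ) = 0) :
    Fp (p + 1) κ n = 0 ∧ (1 ≤ p → Fp (p - 1) κ n = 0) :=
  stmt_16_general p n κ hJ hJn
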